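/- Let $X$ be a topological space, $x_0 \in X$, and suppose there is a continuous map $v : X \to [0,1]$ with $v^{-1}(0) = \{x_0\}$ such that the open set $V = \{x : v(x) < 1\}$ deformation retracts to $x_0$, i.e., there is a continuous $h : V \times [0,1] \to V$ with $h(x,0) = x$, $h(x_0,t) = x_0$, and $h(x,1) = x_0$ for all $x \in V$, $t \in [0,1]$. Then $(X, \{x_0\})$ is an NDR-pair: there exist a continuous $u : X \to [0,1]$ with $u^{-1}(0) = \{x_0\}$ and a homotopy $H : X \times [0,1] \to X$ with $H(x,0) = x$, $H(x_0,t) = x_0$, and $H(x,1) = x_0$ whenever $u(x) < 1$. -/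

import Mathlib

/-!
Damp the deformation `h` of `V = {v < 1}` by a cutoff `c : X → [0,1]` that is `1` on
`{v ≤ 1/2}` and `0` on `{v ≥ 3/4}`: put `H (x, t) = h (x, t * c x)` on `V` and `H (x, t) = x`
off `V`. As `c` vanishes on a neighbourhood of `X \ V`, the two pieces glue continuously, and
`u = min (2v) 1` is `< 1` only where `c = 1`, so there `H (x, 1) = h (x, 1) = x₀`.
-/

open Set Topology unitInterval

section CutoffHomotopy

variable {X : Type*} {U : Set X}

open Classical in
noncomputable def cutoffHomotopy (U : Set X) (h : U × I → U) (c : X → I) : X × I → X :=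
  fun p => if hp : p.1 ∈ U then h (⟨p.1, hp⟩, p.2 * c p.1) else p.1

variable {h : U × I → U} {c : X → I}

theorem cutoffHomotopy_of_mem {x : X} (hx : x ∈ U) (t : I) :
    cutoffHomotopy U h c (x, t) = h (⟨x, hx⟩, t * c x) :=
  dif_pos hx

theorem cutoffHomotopy_eq_self_of_eq_zero (h_zero : ∀ x, h (x, 0) = x) {x : X} (hcx : c x = 0)
    (t : I) : cutoffHomotopy U h c (x, t) = x := by
  by_cases hx : x ∈ U
  · rw [cutoffHomotopy_of_mem hx, hcx, mul_zero, h_zero]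
  · exact dif_neg hx

theorem cutoffHomotopy_zero (h_zero : ∀ x, h (x, 0) = x) (x : X) :
    cutoffHomotopy U h c (x, 0) = x := by
  by_cases hx : x ∈ U
  · rw [cutoffHomotopy_of_mem hx, zero_mul, h_zero]
  · exact dif_neg hx

theorem cutoffHomotopy_of_eq_one {x : X} (hx : x ∈ U) (hcx : c x = 1) (t : I) :
    cutoffHomotopy U h c (x, t) = h (⟨x, hx⟩, t) := by
  rw [cutoffHomotopy_of_mem hx, hcx, mul_one]

theorem continuous_cutoffHomotopy [TopologicalSpace X] (hU : IsOpen U) (hh : Continuous h)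
    (hc : Continuous c) (hsupp : tsupport c ⊆ U) (h_zero : ∀ x, h (x, 0) = x) :
    Continuous (cutoffHomotopy U h c) := by
  refine continuous_iff_continuousAt.2 fun p => ?_
  by_cases hp : p.1 ∈ U
  · have hon : ContinuousOn (cutoffHomotopy U h c) (Prod.fst ⁻¹' U) := by
      rw [continuousOn_iff_continuous_domRestrict]
      have : (Prod.fst ⁻¹' U).domRestrict (cutoffHomotopy U h c) =
          fun q => (h (⟨q.1.1, q.2⟩, q.1.2 * c q.1.1) : X) :=
        funext fun ⟨⟨_, t⟩, hx⟩ => cutoffHomotopy_of_mem (h := h) (c := c) hx t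
      rw [this]
      fun_prop
    exact hon.continuousAt ((hU.preimage continuous_fst).mem_nhds hp)
  · have hc0 : ∀ᶠ q : X × I in 𝓝 p, c q.1 = 0 :=
      continuous_fst.continuousAt.eventually
        (notMem_tsupport_iff_eventuallyEq.1 fun hpc => hp (hsupp hpc))
    exact continuousAt_fst.congr (hc0.mono fun q hq =>
      (cutoffHomotopy_eq_self_of_eq_zero h_zero hq q.2).symm)

end CutoffHomotopy

section PlateauCutoff

variable {X : Type*} [TopologicalSpace X]

noncomputable def plateauCutoff (v : X → ℝ) (x : X) : I :=
  projIcc 0 1 zero_le_one (3 - 4 * v x)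

theorem continuous_plateauCutoff {v : X → ℝ} (hv : Continuous v) :
    Continuous (plateauCutoff v) :=
  continuous_projIcc.comp (by fun_prop)

omit [TopologicalSpace X] in
theorem plateauCutoff_eq_one {v : X → ℝ} {x : X} (hx : v x ≤ 1 / 2) : plateauCutoff v x = 1 :=
  projIcc_of_right_le _ (by linarith)

theorem tsupport_plateauCutoff_subset {v : X → ℝ} (hv : Continuous v) :
    tsupport (plateauCutoff v) ⊆ {x | v x < 1} := by
  have hsupp : Function.support (plateauCutoff v) ⊆ {x | v x ≤ 3 / 4} := fun x hx =>
    show v x ≤ 3 / 4 from le_of_not_gt fun hlt => hx (projIcc_of_le_left _ (by linarith))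
  exact (closure_minimal hsupp (isClosed_le hv continuous_const)).trans
    fun x (hx : v x ≤ 3 / 4) => show v x < 1 by linarith

end PlateauCutoff

/-- Strøm's criterion: if `v : X → [0,1]` is continuous with `v⁻¹(0) = {x₀}` and the
open set `V = {x | v x < 1}` deformation retracts to `x₀`, then `(X, {x₀})` is an
NDR-pair. -/
theorem stmt_6 {X : Type*} [TopologicalSpace X] (x₀ : X) (v : X → ℝ)
    (hv_cont : Continuous v) (hv_mem : ∀ x, v x ∈ Set.Icc (0 : ℝ) 1)
    (hv_zero : ∀ x, v x = 0 ↔ x = x₀)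
    (h : {x : X // v x < 1} × Set.Icc (0 : ℝ) 1 → {x : X // v x < 1})
    (h_cont : Continuous h)
    (h_zero : ∀ x, h (x, ⟨0, by norm_num⟩) = x)
    (h_base : ∀ (t : Set.Icc (0 : ℝ) 1) (hx₀ : v x₀ < 1), h (⟨x₀, hx₀⟩, t) = ⟨x₀, hx₀⟩)
    (h_one : ∀ x, (h (x, ⟨1, by norm_num⟩) : X) = x₀) :
    ∃ (u : X → ℝ) (H : X × Set.Icc (0 : ℝ) 1 → X),
      Continuous u ∧ (∀ x, u x ∈ Set.Icc (0 : ℝ) 1) ∧ (∀ x, u x = 0 ↔ x = x₀) ∧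
      Continuous H ∧
      (∀ x, H (x, ⟨0, by norm_num⟩) = x) ∧
      (∀ t, H (x₀, t) = x₀) ∧
      (∀ x, u x < 1 → H (x, ⟨1, by norm_num⟩) = x₀) := by
  have hv₀ : v x₀ = 0 := (hv_zero x₀).2 rfl
  have hx₀ : v x₀ < 1 := by linarith
  refine ⟨fun x => min (2 * v x) 1, cutoffHomotopy {x | v x < 1} h (plateauCutoff v),
    by fun_prop, fun x => ⟨le_min (by linarith [(hv_mem x).1]) zero_le_one, min_le_right _ _⟩,
    fun x => ?_, continuous_cutoffHomotopy (isOpen_lt hv_cont continuous_const) h_cont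
      (continuous_plateauCutoff hv_cont) (tsupport_plateauCutoff_subset hv_cont) h_zero,
    cutoffHomotopy_zero h_zero, fun t => ?_, fun x hux => ?_⟩
  · rw [← hv_zero x]
    grind
  · rw [cutoffHomotopy_of_eq_one (U := {x | v x < 1}) (h := h) hx₀
      (plateauCutoff_eq_one (by linarith)), h_base]
  · have hvx : v x < 1 / 2 := by grind
    rw [cutoffHomotopy_of_eq_one (U := {x | v x < 1}) (h := h) (by linarith : v x < 1)
      (plateauCutoff_eq_one hvx.le), h_one]
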